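/- Let L^n be a path and let ℓ = min{i : t(i)=2} and s = max{i : t(i)=2} (assuming at least two vertices of threshold 2 exist). Then there exists an optimal TWC target set S such that S ∩ {0,…,ℓ−1} = ∅ = S ∩ {s+1,…,n−1} and both ℓ ∈ S and s ∈ S. -/

import Mathlib

set_option linter.unusedVariables false

open Finset

variable {V : Type*} [Fintype V] [DecidableEq V]

/-- `influenced G t lam S r` : set of influenced nodes after round `r`. -/
def influenced (G : SimpleGraph V) [DecidableRel G.Adj] (t : V → ℕ) (lam : ℕ)
    (S : Finset V) : ℕ → Finset V
  | 0 => S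
  | r + 1 =>
    let prev := influenced G t lam S r
    let A := if r + 1 ≤ lam then prev else prev \ influenced G t lam S (r - lam)
    prev ∪ Finset.univ.filter fun v => t v ≤ (G.neighborFinset v ∩ A).card
  termination_by r => r
  decreasing_by all_goals omega

/-- `activeSet G t lam S r` : set of active nodes at round `r`. -/
def activeSet (G : SimpleGraph V) [DecidableRel G.Adj] (t : V → ℕ) (lam : ℕ)
    (S : Finset V) (r : ℕ) : Finset V :=
  if r = 0 then ∅
  else if r ≤ lam then influenced G t lam S (r - 1)
  else influenced G t lam S (r - 1) \ influenced G t lam S (r - 1 - lam)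

def isTargetSet (G : SimpleGraph V) [DecidableRel G.Adj] (t : V → ℕ) (lam : ℕ)
    (S : Finset V) : Prop :=
  ∃ r, influenced G t lam S r = Finset.univ

def pathGraph (n : ℕ) : SimpleGraph (Fin n) where
  Adj i j := i.val + 1 = j.val ∨ j.val + 1 = i.val
  symm := ⟨fun i j h => h.symm⟩
  loopless := ⟨fun i h => by rcases h with h | h <;> omega⟩

instance (n : ℕ) : DecidableRel (pathGraph n).Adj :=
  fun i j => inferInstanceAs (Decidable (i.val + 1 = j.val ∨ j.val + 1 = i.val))

def ringGraph (n : ℕ) : SimpleGraph (Fin n) where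
  Adj i j := i ≠ j ∧ ((i.val + 1) % n = j.val ∨ (j.val + 1) % n = i.val)
  symm := ⟨fun i j h => ⟨h.1.symm, h.2.symm⟩⟩
  loopless := ⟨fun i h => h.1 rfl⟩

instance (n : ℕ) : DecidableRel (ringGraph n).Adj :=
  fun i j => inferInstanceAs (Decidable (_ ∧ (_ ∨ _)))

instance : DecidableRel (⊤ : SimpleGraph V).Adj :=
  fun a b => inferInstanceAs (Decidable (a ≠ b))

/-!
With thresholds in `{1, 2}` on a path, a vertex of threshold 1 is influenced one round after a
neighbour is, whereas a vertex of threshold 2 needs both neighbours active in the same round. In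
particular a threshold-2 vertex `c` with every seed to its right shields `{0, …, c}` forever.

Take an optimal target set and replace its seeds left of `ℓ` by `ℓ` itself. Right of `ℓ` the
process does not change: either `ℓ` is a seed of both sets, or, having threshold 2, it becomes
active only after `ℓ + 1` is already influenced. Everything left of `ℓ` has threshold 1 and is
swept from `ℓ`, and if `ℓ` was not a seed then some seed lay left of it (otherwise `ℓ` is shielded),
so the set does not grow. The same exchange at `s`, through the reflection of the path, finishes
the proof.
-/

section General

variable {G : SimpleGraph V} [DecidableRel G.Adj] {t : V → ℕ} {lam : ℕ} {S : Finset V}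

theorem influenced_zero : influenced G t lam S 0 = S := by
  rw [influenced]

theorem activeSet_succ (r : ℕ) :
    activeSet G t lam S (r + 1) =
      if r + 1 ≤ lam then influenced G t lam S r
      else influenced G t lam S r \ influenced G t lam S (r - lam) := by
  simp [activeSet]

theorem influenced_succ (r : ℕ) :
    influenced G t lam S (r + 1) = influenced G t lam S r ∪
      univ.filter fun v => t v ≤ #(G.neighborFinset v ∩ activeSet G t lam S (r + 1)) := by
  rw [influenced, activeSet_succ]

theorem mem_influenced_succ {r : ℕ} {v : V} :
    v ∈ influenced G t lam S (r + 1) ↔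
      v ∈ influenced G t lam S r ∨ t v ≤ #(G.neighborFinset v ∩ activeSet G t lam S (r + 1)) := by
  simp [influenced_succ]

theorem mem_activeSet_succ {r : ℕ} {u : V} :
    u ∈ activeSet G t lam S (r + 1) ↔
      u ∈ influenced G t lam S r ∧ (r + 1 ≤ lam ∨ u ∉ influenced G t lam S (r - lam)) := by
  rw [activeSet_succ]
  split_ifs with h <;> simp [h]

theorem monotone_influenced : Monotone (influenced G t lam S) :=
  monotone_nat_of_le_succ fun r => by
    rw [influenced_succ]
    exact subset_union_left

theorem subset_influenced (r : ℕ) : S ⊆ influenced G t lam S r :=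
  fun _ hv => monotone_influenced (Nat.zero_le r) (by rwa [influenced_zero])

theorem activeSet_succ_subset (r : ℕ) : activeSet G t lam S (r + 1) ⊆ influenced G t lam S r :=
  fun _ hu => (mem_activeSet_succ.1 hu).1

theorem influenced_empty (ht : ∀ v, 1 ≤ t v) (r : ℕ) : influenced G t lam ∅ r = ∅ := by
  induction r with
  | zero => exact influenced_zero
  | succ r ih =>
    have hA : activeSet G t lam ∅ (r + 1) = ∅ := by
      simpa only [ih, subset_empty] using
        activeSet_succ_subset (G := G) (t := t) (lam := lam) (S := ∅) r
    ext v
    simpa [mem_influenced_succ, ih, hA, Nat.one_le_iff_ne_zero] using ht v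

theorem exists_le_card_of_mem_influenced_succ {r : ℕ} {v : V} (hvS : v ∉ S)
    (hv : v ∈ influenced G t lam S (r + 1)) :
    ∃ k ≤ r, t v ≤ #(G.neighborFinset v ∩ activeSet G t lam S (k + 1)) := by
  induction r with
  | zero =>
    rcases mem_influenced_succ.1 hv with h | h
    · rw [influenced_zero] at h
      exact absurd h hvS
    · exact ⟨0, le_rfl, h⟩
  | succ r ih =>
    rcases mem_influenced_succ.1 hv with h | h
    · obtain ⟨k, hk, h⟩ := ih h
      exact ⟨k, by omega, h⟩
    · exact ⟨r + 1, le_rfl, h⟩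

theorem exists_adj_mem_influenced {r : ℕ} {v : V} (ht : 1 ≤ t v) (hvS : v ∉ S)
    (hv : v ∈ influenced G t lam S (r + 1)) : ∃ u, G.Adj v u ∧ u ∈ influenced G t lam S r := by
  obtain ⟨k, hk, hcard⟩ := exists_le_card_of_mem_influenced_succ hvS hv
  obtain ⟨u, hu⟩ := card_pos.1 (ht.trans hcard)
  rw [mem_inter, SimpleGraph.mem_neighborFinset] at hu
  exact ⟨u, hu.1, monotone_influenced hk (activeSet_succ_subset k hu.2)⟩

theorem mem_influenced_succ_of_adj (hlam : 1 ≤ lam) {r : ℕ} {u v : V}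
    (hu : u ∈ influenced G t lam S r) (hadj : G.Adj v u) (hv : t v ≤ 1) :
    v ∈ influenced G t lam S (r + 1) := by
  classical
  have hex : ∃ ρ, u ∈ influenced G t lam S ρ := ⟨r, hu⟩
  have hact : u ∈ activeSet G t lam S (Nat.find hex + 1) := by
    refine mem_activeSet_succ.2 ⟨Nat.find_spec hex, ?_⟩
    by_cases h : Nat.find hex + 1 ≤ lam
    · exact Or.inl h
    · exact Or.inr (Nat.find_min hex (by omega))
  have hcard : t v ≤ #(G.neighborFinset v ∩ activeSet G t lam S (Nat.find hex + 1)) :=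
    hv.trans (card_pos.2 ⟨u, mem_inter.2 ⟨(G.mem_neighborFinset v u).2 hadj, hact⟩⟩)
  exact monotone_influenced (Nat.succ_le_succ (Nat.find_min' hex hu))
    (mem_influenced_succ.2 (Or.inr hcard))

theorem exists_isTargetSet_forall_card_le :
    ∃ S, isTargetSet G t lam S ∧ ∀ S', isTargetSet G t lam S' → #S ≤ #S' := by
  classical
  obtain ⟨S, hS, hmin⟩ := (univ.filter (isTargetSet G t lam)).exists_min_image card
    ⟨univ, mem_filter.2 ⟨mem_univ _, 0, influenced_zero⟩⟩
  exact ⟨S, (mem_filter.1 hS).2, fun S' hS' => hmin S' (mem_filter.2 ⟨mem_univ _, hS'⟩)⟩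

end General

section Iso

variable {W : Type*} [Fintype W] [DecidableEq W] {G : SimpleGraph V} {H : SimpleGraph W}
  [DecidableRel G.Adj] [DecidableRel H.Adj]

theorem influenced_image (e : G ≃g H) (t : W → ℕ) (lam : ℕ) (S : Finset V) (r : ℕ) :
    influenced H t lam (S.image e) r = (influenced G (t ∘ e) lam S r).image e := by
  induction r using Nat.strong_induction_on with
  | _ r ih =>
  cases r with
  | zero => simp only [influenced_zero]
  | succ r =>
    have hA : activeSet H t lam (S.image e) (r + 1) =
        (activeSet G (t ∘ e) lam S (r + 1)).image e := by
      rw [activeSet_succ, activeSet_succ]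
      split_ifs
      · exact ih r (by omega)
      · rw [ih r (by omega), ih (r - lam) (by omega), image_sdiff _ _ e.injective]
    have hN (v : V) : H.neighborFinset (e v) = (G.neighborFinset v).image e := by
      ext w
      obtain ⟨u, rfl⟩ := e.surjective w
      simp [e.injective.mem_finset_image, e.map_adj_iff]
    rw [influenced_succ, influenced_succ, ih r (by omega), image_union, hA]
    congr 1
    ext w
    obtain ⟨v, rfl⟩ := e.surjective w
    simp [hN, ← image_inter _ _ e.injective, card_image_of_injective _ e.injective,
      e.injective.mem_finset_image]

theorem isTargetSet_image_iff (e : G ≃g H) {t : W → ℕ} {lam : ℕ} {S : Finset V} :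
    isTargetSet H t lam (S.image e) ↔ isTargetSet G (t ∘ e) lam S := by
  refine exists_congr fun r => ?_
  rw [influenced_image, ← image_univ_of_surjective e.surjective,
    (image_injective e.injective).eq_iff]

end Iso

theorem pathGraph_adj {n : ℕ} {u v : Fin n} :
    (pathGraph n).Adj u v ↔ u.val + 1 = v.val ∨ v.val + 1 = u.val :=
  Iff.rfl

def pathGraph.revIso (n : ℕ) : pathGraph n ≃g pathGraph n where
  toEquiv := Fin.revPerm
  map_rel_iff' {u v} := by
    simp only [Fin.revPerm_apply, pathGraph_adj, Fin.val_rev]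
    omega

theorem pathGraph.coe_revIso (n : ℕ) : ⇑(pathGraph.revIso n) = Fin.rev :=
  rfl

section Path

variable {n lam : ℕ} {t : Fin n → ℕ} {S S' : Finset (Fin n)}

local notation "Infl" => influenced (pathGraph n) t lam

theorem exists_pred_and_succ_of_two_le_card {v : Fin n} {A : Finset (Fin n)}
    (h : 2 ≤ #((pathGraph n).neighborFinset v ∩ A)) :
    (∃ p ∈ A, p.val + 1 = v.val) ∧ (∃ q ∈ A, v.val + 1 = q.val) := by
  obtain ⟨a, ha, b, hb, hab⟩ := one_lt_card.1 h
  simp only [mem_inter, SimpleGraph.mem_neighborFinset, pathGraph_adj] at ha hb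
  have hab' : a.val ≠ b.val := Fin.val_ne_of_ne hab
  rcases ha.1 with ha' | ha' <;> rcases hb.1 with hb' | hb'
  · omega
  · exact ⟨⟨b, hb.2, hb'⟩, ⟨a, ha.2, ha'⟩⟩
  · exact ⟨⟨a, ha.2, ha'⟩, ⟨b, hb.2, hb'⟩⟩
  · omega

theorem exists_pred_and_succ_mem_influenced {c : Fin n} {r : ℕ} (hc : 2 ≤ t c) (hcS : c ∉ S)
    (h : c ∈ Infl S (r + 1)) :
    (∃ p ∈ Infl S r, p.val + 1 = c.val) ∧ (∃ q ∈ Infl S r, c.val + 1 = q.val) := by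
  obtain ⟨k, hk, hcard⟩ := exists_le_card_of_mem_influenced_succ hcS h
  have hsub : activeSet (pathGraph n) t lam S (k + 1) ⊆ Infl S r :=
    (activeSet_succ_subset k).trans (monotone_influenced hk)
  obtain ⟨⟨p, hp, hpc⟩, ⟨q, hq, hcq⟩⟩ := exists_pred_and_succ_of_two_le_card (hc.trans hcard)
  exact ⟨⟨p, hsub hp, hpc⟩, ⟨q, hsub hq, hcq⟩⟩

theorem notMem_influenced_of_le (ht : ∀ v, 1 ≤ t v) {c : Fin n} (hc : 2 ≤ t c)
    (hS : ∀ x ∈ S, c < x) (r : ℕ) {v : Fin n} (hv : v ≤ c) : v ∉ Infl S r := by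
  induction r generalizing v with
  | zero =>
    rw [influenced_zero]
    exact fun hvS => (hS v hvS).not_ge hv
  | succ r ih =>
    intro hvr
    have hvS : v ∉ S := fun hvS => (hS v hvS).not_ge hv
    rcases hv.eq_or_lt with rfl | hvc
    · obtain ⟨⟨p, hp, hpv⟩, -⟩ := exists_pred_and_succ_mem_influenced hc hvS hvr
      exact ih (Fin.le_def.2 (by omega)) hp
    · obtain ⟨u, hadj, hu⟩ := exists_adj_mem_influenced (ht v) hvS hvr
      rw [pathGraph_adj] at hadj
      exact ih (Fin.le_def.2 (by rw [Fin.lt_def] at hvc; omega)) hu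

theorem mem_activeSet_succ_iff_of_succ_notMem {c v : Fin n} {r : ℕ} (hc : c ∈ S ∨ 2 ≤ t c)
    (hcv : c.val + 1 = v.val) (hv : v ∉ Infl S r) :
    c ∈ activeSet (pathGraph n) t lam S (r + 1) ↔ c ∈ S ∧ r + 1 ≤ lam := by
  by_cases hcS : c ∈ S
  · simp [mem_activeSet_succ, hcS, subset_influenced _ hcS]
  · simp only [hcS, false_and, iff_false]
    intro hact
    have hcr := (mem_activeSet_succ.1 hact).1
    cases r with
    | zero =>
      rw [influenced_zero] at hcr
      exact hcS hcr
    | succ r =>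
      obtain ⟨-, ⟨q, hq, hcq⟩⟩ :=
        exists_pred_and_succ_mem_influenced (hc.resolve_left hcS) hcS hcr
      obtain rfl : q = v := Fin.ext (by omega)
      exact hv (monotone_influenced r.le_succ hq)

theorem mem_influenced_iff_of_inter_Ici_eq {c : Fin n} (hSS' : S ∩ Ici c = S' ∩ Ici c)
    (hc : c ∈ S ∨ 2 ≤ t c) (r : ℕ) {v : Fin n} (hv : c < v) :
    v ∈ Infl S r ↔ v ∈ Infl S' r := by
  have hcS : c ∈ S ↔ c ∈ S' := by simpa using congrArg (c ∈ ·) hSS'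
  have hc' : c ∈ S' ∨ 2 ≤ t c := hc.imp_left hcS.1
  induction r using Nat.strong_induction_on generalizing v with
  | _ r ih =>
  cases r with
  | zero => simpa [influenced_zero, hv.le] using congrArg (v ∈ ·) hSS'
  | succ r =>
    have hvr_iff : v ∈ Infl S r ↔ v ∈ Infl S' r := ih r r.lt_succ_self hv
    rw [mem_influenced_succ, mem_influenced_succ, hvr_iff]
    refine or_congr_right' fun hvr => ?_
    have hvr' : v ∉ Infl S r := by rwa [hvr_iff]
    suffices (pathGraph n).neighborFinset v ∩ activeSet (pathGraph n) t lam S (r + 1) =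
        (pathGraph n).neighborFinset v ∩ activeSet (pathGraph n) t lam S' (r + 1) by rw [this]
    ext u
    simp only [mem_inter, SimpleGraph.mem_neighborFinset]
    refine and_congr_right fun hu => ?_
    by_cases hcu : c < u
    · have h₁ : u ∈ Infl S r ↔ u ∈ Infl S' r := ih r r.lt_succ_self hcu
      have h₂ : u ∈ Infl S (r - lam) ↔ u ∈ Infl S' (r - lam) :=
        ih (r - lam) (Nat.lt_succ_of_le (Nat.sub_le r lam)) hcu
      rw [mem_activeSet_succ, mem_activeSet_succ, h₁, h₂]
    · rw [pathGraph_adj] at hu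
      rw [Fin.lt_def] at hv hcu
      obtain rfl : u = c := Fin.ext (by omega)
      have huv : u.val + 1 = v.val := by omega
      rw [mem_activeSet_succ_iff_of_succ_notMem hc huv hvr',
        mem_activeSet_succ_iff_of_succ_notMem hc' huv hvr, hcS]

theorem mem_influenced_add_of_le (hlam : 1 ≤ lam) {c : Fin n} {r : ℕ} (hc : c ∈ Infl S r) :
    ∀ (k : ℕ) (v : Fin n), v.val + k = c.val → (∀ w, v ≤ w → w < c → t w ≤ 1) →
      v ∈ Infl S (r + k)
  | 0, v, hv, _ => (Fin.ext (by omega) : v = c) ▸ hc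
  | k + 1, v, hv, ht => by
    have hsucc : (⟨v.val + 1, by omega⟩ : Fin n) ∈ Infl S (r + k) :=
      mem_influenced_add_of_le hlam hc k _ (by simp only; omega)
        fun w hw hwc => ht w (Fin.le_def.2 ((Nat.le_succ _).trans (Fin.le_def.1 hw))) hwc
    exact mem_influenced_succ_of_adj hlam hsucc (Or.inl rfl)
      (ht v le_rfl (Fin.lt_def.2 (by omega)))

theorem mem_influenced_add_of_ge (hlam : 1 ≤ lam) {c : Fin n} {r : ℕ} (hc : c ∈ Infl S r) :
    ∀ (k : ℕ) (v : Fin n), c.val + k = v.val → (∀ w, c < w → w ≤ v → t w ≤ 1) →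
      v ∈ Infl S (r + k)
  | 0, v, hv, _ => (Fin.ext (by omega) : v = c) ▸ hc
  | k + 1, v, hv, ht => by
    have hpred : (⟨v.val - 1, by omega⟩ : Fin n) ∈ Infl S (r + k) :=
      mem_influenced_add_of_ge hlam hc k _ (by simp only; omega)
        fun w hcw hw => ht w hcw (Fin.le_def.2 ((Fin.le_def.1 hw).trans (Nat.sub_le _ _)))
    exact mem_influenced_succ_of_adj hlam hpred (Or.inr (by simp only; omega))
      (ht v (Fin.lt_def.2 (by omega)) le_rfl)

theorem mem_influenced_insert_of_le (hlam : 1 ≤ lam) (ht : ∀ v, 1 ≤ t v) {l : Fin n}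
    {F : Finset (Fin n)} {R : ℕ} (hF : ∀ x ∈ F, l ≤ x) (hcov : ∀ v, l < v → v ∈ Infl F R)
    {v : Fin n} (hlv : l ≤ v) : v ∈ Infl (insert l F) (R + n) := by
  have hl : l ∈ Infl (insert l F) 0 := subset_influenced 0 (mem_insert_self l F)
  rcases hlv.eq_or_lt with rfl | hlv
  · exact monotone_influenced (Nat.zero_le _) hl
  have hFne : F.Nonempty := nonempty_iff_ne_empty.2 fun hF0 => by
    simpa [hF0, influenced_empty ht] using hcov v hlv
  have hbF : F.min' hFne ∈ F := F.min'_mem hFne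
  rcases lt_or_ge v (F.min' hFne) with hvb | hbv
  · have hcorr : ∀ w, l < w → w ≤ v → t w ≤ 1 := fun w hlw hwv => by
      by_contra! hw
      exact notMem_influenced_of_le ht hw
        (fun x hx => (hwv.trans_lt hvb).trans_le (F.min'_le x hx)) R le_rfl (hcov w hlw)
    rw [Fin.lt_def] at hlv
    exact monotone_influenced (by omega)
      (mem_influenced_add_of_ge hlam hl (v.val - l.val) v (by omega) hcorr)
  rcases hbv.eq_or_lt with hbv | hbv
  · exact hbv ▸ subset_influenced _ (mem_insert_of_mem hbF)
  have hins : insert l F ∩ Ici (F.min' hFne) = F ∩ Ici (F.min' hFne) := by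
    rcases (hF _ hbF).eq_or_lt with hlb | hlb
    · rw [hlb, insert_eq_of_mem hbF]
    · exact insert_inter_of_notMem (by simpa using hlb)
  exact monotone_influenced (by omega) ((mem_influenced_iff_of_inter_Ici_eq hins
    (Or.inl (mem_insert_of_mem hbF)) R hbv).2 (hcov v hlv))

theorem isTargetSet_insert_filter_le (hlam : 1 ≤ lam) (ht : ∀ v, 1 ≤ t v) {l : Fin n}
    (hl : 2 ≤ t l) (hleft : ∀ w < l, t w ≤ 1) (hS : isTargetSet (pathGraph n) t lam S) :
    isTargetSet (pathGraph n) t lam (insert l (S.filter (l ≤ ·))) := by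
  obtain ⟨R, hR⟩ := hS
  refine ⟨R + n, eq_univ_of_forall fun v => ?_⟩
  rcases lt_or_ge v l with hvl | hlv
  · have hl0 : l ∈ Infl (insert l (S.filter (l ≤ ·))) 0 := subset_influenced 0 (mem_insert_self _ _)
    rw [Fin.lt_def] at hvl
    exact monotone_influenced (by omega)
      (mem_influenced_add_of_le hlam hl0 (l.val - v.val) v (by omega) fun w _ hw => hleft w hw)
  · have hSF : S ∩ Ici l = S.filter (l ≤ ·) ∩ Ici l := by
      ext x
      simp
    refine mem_influenced_insert_of_le hlam ht (fun x hx => (mem_filter.1 hx).2)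
      (fun w hlw => ?_) hlv
    rw [← mem_influenced_iff_of_inter_Ici_eq hSF (Or.inr hl) R hlw, hR]
    exact mem_univ w

theorem card_insert_filter_le (ht : ∀ v, 1 ≤ t v) {l : Fin n} (hl : 2 ≤ t l)
    (hS : isTargetSet (pathGraph n) t lam S) : #(insert l (S.filter (l ≤ ·))) ≤ #S := by
  by_cases hlS : l ∈ S
  · rw [insert_eq_of_mem (mem_filter.2 ⟨hlS, le_rfl⟩)]
    exact card_filter_le _ _
  obtain ⟨R, hR⟩ := hS
  have hx : ∃ x ∈ S, ¬l ≤ x := by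
    by_contra! h
    exact notMem_influenced_of_le ht hl (fun x hx => (h x hx).lt_of_ne fun e => hlS (e ▸ hx))
      R le_rfl (hR ▸ mem_univ l)
  calc #(insert l (S.filter (l ≤ ·))) ≤ #(S.filter (l ≤ ·)) + 1 := card_insert_le _ _
    _ ≤ #S := card_lt_card (filter_ssubset.2 hx)

end Path

section Reverse

variable {n lam : ℕ} {t : Fin n → ℕ} {S : Finset (Fin n)}

theorem isTargetSet_image_rev_iff :
    isTargetSet (pathGraph n) (t ∘ Fin.rev) lam (S.image Fin.rev) ↔
      isTargetSet (pathGraph n) t lam S := by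
  rw [← pathGraph.coe_revIso, isTargetSet_image_iff, Function.comp_assoc, pathGraph.coe_revIso,
    Fin.rev_involutive.comp_self, Function.comp_id]

theorem image_rev_insert_filter_rev_le (s : Fin n) (S : Finset (Fin n)) :
    (insert s.rev ((S.image Fin.rev).filter (s.rev ≤ ·))).image Fin.rev =
      insert s (S.filter (· ≤ s)) := by
  ext v
  simp [Fin.le_rev_iff, Fin.rev_eq_iff]

theorem isTargetSet_insert_filter_ge (hlam : 1 ≤ lam) (ht : ∀ v, 1 ≤ t v) {s : Fin n}
    (hs : 2 ≤ t s) (hright : ∀ w, s < w → t w ≤ 1) (hS : isTargetSet (pathGraph n) t lam S) :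
    isTargetSet (pathGraph n) t lam (insert s (S.filter (· ≤ s))) := by
  rw [← image_rev_insert_filter_rev_le, ← pathGraph.coe_revIso, isTargetSet_image_iff,
    pathGraph.coe_revIso]
  exact isTargetSet_insert_filter_le hlam (fun v => ht v.rev) (by simpa using hs)
    (fun w hw => hright w.rev (Fin.lt_rev_iff.1 hw)) (isTargetSet_image_rev_iff.2 hS)

theorem card_insert_filter_ge (ht : ∀ v, 1 ≤ t v) {s : Fin n} (hs : 2 ≤ t s)
    (hS : isTargetSet (pathGraph n) t lam S) : #(insert s (S.filter (· ≤ s))) ≤ #S := by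
  rw [← image_rev_insert_filter_rev_le, card_image_of_injective _ Fin.rev_injective,
    ← card_image_of_injective S Fin.rev_injective]
  exact card_insert_filter_le (fun v => ht v.rev) (by simpa using hs)
    (isTargetSet_image_rev_iff.2 hS)

end Reverse

/-- on a path, with `l` the smallest and `s` the largest index of
threshold-2 vertices (at least two such vertices), there is an optimal TWC
target set contained in `{l,…,s}` that contains both `l` and `s`. -/
theorem stmt6 (n lam : ℕ) (hlam : 1 ≤ lam) (t : Fin n → ℕ)
    (htv : ∀ v, t v = 1 ∨ t v = 2)
    (l s : Fin n) (htl : t l = 2) (hts : t s = 2)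
    (hmin : ∀ v, t v = 2 → l ≤ v) (hmax : ∀ v, t v = 2 → v ≤ s) :
    ∃ S : Finset (Fin n), isTargetSet (pathGraph n) t lam S ∧
      (∀ S' : Finset (Fin n), isTargetSet (pathGraph n) t lam S' → S.card ≤ S'.card) ∧
      (∀ v ∈ S, l ≤ v ∧ v ≤ s) ∧ l ∈ S ∧ s ∈ S := by
  have ht (v : Fin n) : 1 ≤ t v := by rcases htv v with h | h <;> omega
  have hleft (w : Fin n) (hw : w < l) : t w ≤ 1 :=
    (htv w).elim le_of_eq fun h => absurd (hmin w h) (not_le.2 hw)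
  have hright (w : Fin n) (hw : s < w) : t w ≤ 1 :=
    (htv w).elim le_of_eq fun h => absurd (hmax w h) (not_le.2 hw)
  obtain ⟨S₀, hS₀, hopt⟩ :=
    exists_isTargetSet_forall_card_le (G := pathGraph n) (t := t) (lam := lam)
  set S₁ := insert l (S₀.filter (l ≤ ·))
  have hS₁ : isTargetSet (pathGraph n) t lam S₁ :=
    isTargetSet_insert_filter_le hlam ht htl.ge hleft hS₀
  refine ⟨insert s (S₁.filter (· ≤ s)), isTargetSet_insert_filter_ge hlam ht hts.ge hright hS₁,
    fun S' hS' => ((card_insert_filter_ge ht hts.ge hS₁).trans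
      (card_insert_filter_le ht htl.ge hS₀)).trans (hopt S' hS'), ?_,
    mem_insert_of_mem (mem_filter.2 ⟨mem_insert_self l _, hmax l htl⟩), mem_insert_self s _⟩
  simp only [S₁, mem_insert, mem_filter]
  rintro v (rfl | ⟨rfl | ⟨-, hlv⟩, hvs⟩)
  · exact ⟨hmax l htl, le_rfl⟩
  · exact ⟨le_rfl, hvs⟩
  · exact ⟨hlv, hvs⟩
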